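/- arXiv:1812.00461 — 3 statements merged into one kernel-verified Lean document; each statement's English description precedes it below -/
import Mathlib

section
/- Let A(t) be the generator of a C_0-quasi-semigroup {R(t,s)} on a Banach space X with A(t+h)=A(t) for all t,h ≥ 0. Then for all λ ∈ ℂ, t,s ≥ 0 and n ∈ ℕ: N[(λ − A(t))^n] ⊆ N[(e^{λs} − R(t,s))^n], where N denotes kernel. -/
open Filter Topology MeasureTheory Set

variable {X : Type*}

/-- A strongly continuous quasi-semigroup of bounded operators. -/
def IsQuasiSemigroup [NormedAddCommGroup X] [NormedSpace ℂ X]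
    (R : ℝ → ℝ → X →L[ℂ] X) : Prop :=
  (∀ t : ℝ, 0 ≤ t → R t 0 = 1) ∧
  (∀ t s r : ℝ, 0 ≤ t → 0 ≤ s → 0 ≤ r → R t (s + r) = (R (t + r) s).comp (R t r)) ∧
  (∀ t : ℝ, 0 ≤ t → ∀ x : X, Tendsto (fun s => R t s x) (nhdsWithin 0 (Set.Ici 0)) (nhds x)) ∧
  (∃ M : ℝ → ℝ, Continuous M ∧ Monotone M ∧ (∀ u : ℝ, 0 ≤ u → 1 ≤ M u) ∧
    ∀ t s : ℝ, 0 ≤ t → 0 ≤ s → ‖R t s‖ ≤ M (t + s))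

/-- The limit defining the generator at time `t`. -/
def GenLimit [NormedAddCommGroup X] [NormedSpace ℂ X]
    (R : ℝ → ℝ → X →L[ℂ] X) (t : ℝ) (x y : X) : Prop :=
  Tendsto (fun s : ℝ => s⁻¹ • (R t s x - x)) (nhdsWithin 0 (Set.Ioi 0)) (nhds y)

/-- The auxiliary backwards limit defining the generator at time `t`. -/
def GenLimit' [NormedAddCommGroup X] [NormedSpace ℂ X]
    (R : ℝ → ℝ → X →L[ℂ] X) (t : ℝ) (x y : X) : Prop :=
  Tendsto (fun s : ℝ => s⁻¹ • (R (t - s) s x - x)) (nhdsWithin 0 (Set.Ioi 0)) (nhds y)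

/-- `A` is the generator family of the quasi-semigroup `R`, with (common) domain `D`. -/
def IsGenerator [NormedAddCommGroup X] [NormedSpace ℂ X]
    (R : ℝ → ℝ → X →L[ℂ] X) (A : ℝ → X → X) (D : Set X) : Prop :=
  (∀ x : X, x ∈ D ↔
    ((∃ y, GenLimit R 0 x y) ∧ ∀ t : ℝ, 0 < t → ∃ y, GenLimit R t x y ∧ GenLimit' R t x y)) ∧
  (∀ t : ℝ, 0 ≤ t → ∀ x ∈ D, GenLimit R t x (A t x))

/-! Write `x k = (λ - A t)^[k] x` and, for `u ∈ [0, s]`, `F k u = e^{λu} R(t+u, s-u) (x k)`.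
Since `A` does not depend on time, the composition law and the definition of the generator give
the right derivative `F k' = F (k+1)` for `k < n`, while `F n = 0`. Hence each `F k` is the
polynomial `∑ j, (u - s)^j / j! • F (k+j) s`, and `F (k+j) s = e^{λs} x (k+j)` because
`R(t+s, 0) = 1`. At `u = 0` this reads `R(t,s) (x k) = e^{λs} ∑ j, (-s)^j / j! • x (k+j)`, so
`e^{λs} - R(t,s)` maps `x k` into the span of `x (k+1), …, x (n-1)`, and its `n`-th power kills
`x = x 0`. -/

open scoped Nat

section Taylor

open Finset

lemma hasDerivAt_sub_pow_succ_div_factorial (b u : ℝ) (j : ℕ) :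
    HasDerivAt (fun v : ℝ => (v - b) ^ (j + 1) / (j + 1)!) ((u - b) ^ j / j !) u := by
  refine (((hasDerivAt_id u).sub_const b).pow (j + 1)).div_const ((j + 1)! : ℝ) |>.congr_deriv ?_
  rw [Nat.factorial_succ, Nat.cast_mul]
  field_simp
  simp

variable {E : Type*} [NormedAddCommGroup E] [NormedSpace ℝ E]

lemma hasDerivAt_sum_sub_pow_div_factorial_smul (c : ℕ → E) (b u : ℝ) (m : ℕ) :
    HasDerivAt (fun v : ℝ => ∑ j ∈ range (m + 1), ((v - b) ^ j / j !) • c j)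
      (∑ j ∈ range m, ((u - b) ^ j / j !) • c (j + 1)) u := by
  simp_rw [sum_range_succ' _ m]
  simpa using HasDerivAt.fun_sum fun j _ =>
    (hasDerivAt_sub_pow_succ_div_factorial b u j).smul_const (c (j + 1))

theorem eq_sum_sub_pow_div_factorial_smul_of_hasDerivWithinAt
    {F : ℕ → ℝ → E} {a b : ℝ} {n : ℕ}
    (hcont : ∀ k < n, ContinuousOn (F k) (Icc a b))
    (hderiv : ∀ k < n, ∀ u ∈ Ico a b, HasDerivWithinAt (F k) (F (k + 1) u) (Ici u) u)
    (hn : ∀ u ∈ Icc a b, F n u = 0) {k : ℕ} (hk : k ≤ n) :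
    ∀ u ∈ Icc a b, F k u = ∑ j ∈ range (n - k), ((u - b) ^ j / j !) • F (k + j) b := by
  induction hk using Nat.decreasingInduction with
  | self => simpa using hn
  | of_succ k hk ih =>
    set G : ℝ → E := fun u => ∑ j ∈ range (n - k), ((u - b) ^ j / j !) • F (k + j) b
    have hnk : n - k = n - (k + 1) + 1 := by omega
    have hG : ∀ u ∈ Ico a b, HasDerivAt G (F (k + 1) u) u := by
      intro u hu
      rw [ih u (Ico_subset_Icc_self hu)]
      simp only [G, hnk, add_right_comm k 1]
      exact hasDerivAt_sum_sub_pow_div_factorial_smul (fun j => F (k + j) b) b u _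
    have hGb : G b = F k b := by
      simp [G, hnk, sum_range_succ']
    have hGc : Continuous G := continuous_finsetSum _ fun j _ => by fun_prop
    have hconst := constant_of_has_deriv_right_zero ((hcont k hk).sub hGc.continuousOn)
      fun u hu => by simpa using (hderiv k hk u hu).sub (hG u hu).hasDerivWithinAt
    intro u hu
    have h := (hconst u hu).trans (hconst b ⟨hu.1.trans hu.2, le_rfl⟩).symm
    rw [Pi.sub_apply, Pi.sub_apply, hGb, sub_self, sub_eq_zero] at h
    exact h

end Taylor

open Submodule in
theorem LinearMap.iterate_apply_eq_zero_of_apply_mem_span {K M : Type*} [Semiring K]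
    [AddCommMonoid M] [Module K M] (f : M →ₗ[K] M) (v : ℕ → M) {n : ℕ}
    (hf : ∀ k < n, f (v k) ∈ span K (v '' Ico (k + 1) n)) {y : M}
    (hy : y ∈ span K (v '' Iio n)) : f^[n] y = 0 := by
  have hmap : ∀ m, span K (v '' Ico m n) ≤ (span K (v '' Ico (m + 1) n)).comap f := by
    refine fun m => span_le.2 ?_
    rintro _ ⟨k, ⟨hmk, hkn⟩, rfl⟩
    exact span_mono (image_mono (Ico_subset_Ico_left (by omega))) (hf k hkn)
  have hiter : ∀ m, f^[m] y ∈ span K (v '' Ico m n) := by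
    intro m
    induction m with
    | zero => exact span_mono (image_mono fun k hk => mem_Ico.2 ⟨k.zero_le, mem_Iio.1 hk⟩) hy
    | succ m ih => exact (Function.iterate_succ_apply' f m y).symm ▸ hmap m ih
  simpa using hiter n

lemma tendsto_sub_const_nhdsWithin {a : ℝ} {s t : Set ℝ} (hst : MapsTo (· - a) s t) :
    Tendsto (· - a) (𝓝[s] a) (𝓝[t] 0) := by
  simpa using ((continuous_sub_right a).continuousWithinAt (x := a)).tendsto_nhdsWithin hst

lemma tendsto_const_sub_nhdsWithin {a : ℝ} {s t : Set ℝ} (hst : MapsTo (a - ·) s t) :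
    Tendsto (a - ·) (𝓝[s] a) (𝓝[t] 0) := by
  simpa using ((continuous_sub_left a).continuousWithinAt (x := a)).tendsto_nhdsWithin hst

section BoundedOperators

variable {𝕜 E F ι : Type*} [NontriviallyNormedField 𝕜] [NormedAddCommGroup E]
  [NormedSpace 𝕜 E] [NormedAddCommGroup F] [NormedSpace 𝕜 F] {l : Filter ι}
  {T : ι → E →L[𝕜] F} {C : ℝ}

lemma tendsto_apply_zero_of_eventually_norm_le (hT : ∀ᶠ i in l, ‖T i‖ ≤ C) {w : ι → E}
    (hw : Tendsto w l (𝓝 0)) : Tendsto (fun i => T i (w i)) l (𝓝 0) := by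
  refine squeeze_zero_norm' ?_ (by simpa using hw.norm.const_mul C)
  filter_upwards [hT] with i hi
  exact (T i).le_of_opNorm_le hi (w i)

lemma tendsto_apply_of_eventually_norm_le (hT : ∀ᶠ i in l, ‖T i‖ ≤ C) {w : ι → E}
    {w₀ : E} {y : F} (hw : Tendsto w l (𝓝 w₀))
    (hTw₀ : Tendsto (fun i => T i w₀) l (𝓝 y)) :
    Tendsto (fun i => T i (w i)) l (𝓝 y) := by
  have h := (tendsto_apply_zero_of_eventually_norm_le hT
    (tendsto_sub_nhds_zero_iff.2 hw)).add hTw₀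
  simpa only [← map_add, sub_add_cancel, zero_add] using h

end BoundedOperators

lemma tendsto_of_tendsto_inv_smul_sub {E : Type*} [NormedAddCommGroup E] [NormedSpace ℝ E]
    {g : ℝ → E} {z y : E}
    (h : Tendsto (fun ε : ℝ => ε⁻¹ • (g ε - z)) (𝓝[>] 0) (𝓝 y)) :
    Tendsto g (𝓝[>] 0) (𝓝 z) := by
  have h0 := (tendsto_nhdsWithin_of_tendsto_nhds tendsto_id).smul h
  rw [zero_smul] at h0
  rw [← tendsto_sub_nhds_zero_iff]
  refine h0.congr' ?_
  filter_upwards [self_mem_nhdsWithin] with ε (hε : 0 < ε)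
  exact smul_inv_smul₀ hε.ne' _

namespace IsQuasiSemigroup

variable [NormedAddCommGroup X] [NormedSpace ℂ X] {R : ℝ → ℝ → X →L[ℂ] X}
  {A : ℝ → X → X} {D : Set X} {t s : ℝ}

lemma apply_zero (hR : IsQuasiSemigroup R) (ht : 0 ≤ t) (y : X) : R t 0 y = y := by
  rw [hR.1 t ht]
  rfl

lemma apply_eq_apply_apply (hR : IsQuasiSemigroup R) (ht : 0 ≤ t) {h u : ℝ} (hh : 0 ≤ h)
    (hhu : h ≤ u) (hus : u ≤ s) (y : X) :
    R (t + h) (s - h) y = R (t + u) (s - u) (R (t + h) (u - h) y) := by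
  have := hR.2.1 (t + h) (s - u) (u - h) (by linarith) (by linarith) (by linarith)
  rw [show s - u + (u - h) = s - h by ring, show t + h + (u - h) = t + u by ring] at this
  rw [this, ContinuousLinearMap.comp_apply]

lemma exists_norm_le (hR : IsQuasiSemigroup R) (ht : 0 ≤ t) :
    ∃ C, ∀ u ∈ Icc 0 s, ‖R (t + u) (s - u)‖ ≤ C := by
  obtain ⟨M, -, -, -, hM⟩ := hR.2.2.2
  refine ⟨M (t + s), fun u hu => ?_⟩
  have := hM (t + u) (s - u) (by linarith [hu.1]) (by linarith [hu.2])
  rwa [add_add_sub_cancel] at this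

lemma tendsto_nhdsWithin_Icc_right (hR : IsQuasiSemigroup R) (ht : 0 ≤ t) {h : ℝ}
    (hh : h ∈ Icc 0 s) (y : X) :
    Tendsto (fun u => R (t + u) (s - u) y) (𝓝[Icc h s] h) (𝓝 (R (t + h) (s - h) y)) := by
  obtain ⟨C, hC⟩ := hR.exists_norm_le (s := s) ht
  have hbound : ∀ᶠ u in 𝓝[Icc h s] h, ‖R (t + u) (s - u)‖ ≤ C :=
    eventually_nhdsWithin_of_forall fun u hu => hC u ⟨hh.1.trans hu.1, hu.2⟩
  have hshift : Tendsto (fun u => u - h) (𝓝[Icc h s] h) (𝓝[Ici 0] 0) :=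
    tendsto_sub_const_nhdsWithin fun _ hu => sub_nonneg.2 hu.1
  have hsmall : Tendsto (fun u => y - R (t + h) (u - h) y) (𝓝[Icc h s] h) (𝓝 0) := by
    simpa using
      (tendsto_const_nhds (x := y)).sub ((hR.2.2.1 (t + h) (by linarith [hh.1]) y).comp hshift)
  rw [← tendsto_sub_nhds_zero_iff]
  refine (tendsto_apply_zero_of_eventually_norm_le hbound hsmall).congr' ?_
  filter_upwards [self_mem_nhdsWithin] with u hu
  rw [map_sub, ← hR.apply_eq_apply_apply ht hh.1 hu.1 hu.2]

lemma tendsto_apply_sub_nhdsGE_zero (hR : IsQuasiSemigroup R) (hA : IsGenerator R A D)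
    {z : X} (hz : z ∈ D) {τ : ℝ} (hτ : 0 < τ) :
    Tendsto (fun ε => R (τ - ε) ε z) (𝓝[≥] 0) (𝓝 z) := by
  obtain ⟨y, -, hy⟩ := ((hA.1 z).1 hz).2 τ hτ
  have h : ContinuousWithinAt (fun ε => R (τ - ε) ε z) (Ici 0) 0 := by
    rw [← continuousWithinAt_Ioi_iff_Ici, ContinuousWithinAt, sub_zero, hR.apply_zero hτ.le]
    exact tendsto_of_tendsto_inv_smul_sub hy
  simpa [ContinuousWithinAt, hR.apply_zero hτ.le] using h

lemma tendsto_nhdsWithin_Icc_left (hR : IsQuasiSemigroup R) (hA : IsGenerator R A D)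
    (ht : 0 ≤ t) {h : ℝ} (hh : h ∈ Ioc 0 s) {z : X} (hz : z ∈ D) :
    Tendsto (fun u => R (t + u) (s - u) z) (𝓝[Icc 0 h] h) (𝓝 (R (t + h) (s - h) z)) := by
  have hshift : Tendsto (fun u => h - u) (𝓝[Icc 0 h] h) (𝓝[Ici 0] 0) :=
    tendsto_const_sub_nhdsWithin fun _ hu => sub_nonneg.2 hu.2
  have hin : Tendsto (fun u => R (t + u) (h - u) z) (𝓝[Icc 0 h] h) (𝓝 z) := by
    refine ((hR.tendsto_apply_sub_nhdsGE_zero hA hz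
      (by linarith [hh.1] : 0 < t + h)).comp hshift).congr fun u => ?_
    rw [Function.comp_apply, show t + h - (h - u) = t + u by ring]
  refine (((R (t + h) (s - h)).continuous.tendsto z).comp hin).congr' ?_
  filter_upwards [self_mem_nhdsWithin] with u hu
  exact (hR.apply_eq_apply_apply ht hu.1 hu.2 hh.2 z).symm

lemma continuousOn_apply (hR : IsQuasiSemigroup R) (hA : IsGenerator R A D) (ht : 0 ≤ t)
    {z : X} (hz : z ∈ D) : ContinuousOn (fun u => R (t + u) (s - u) z) (Icc 0 s) := by
  intro h hh
  rcases hh.1.eq_or_lt with rfl | hpos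
  · exact hR.tendsto_nhdsWithin_Icc_right ht hh z
  rw [ContinuousWithinAt, ← Icc_union_Icc_eq_Icc hh.1 hh.2, nhdsWithin_union]
  exact (hR.tendsto_nhdsWithin_Icc_left hA ht ⟨hpos, hh.2⟩ hz).sup
    (hR.tendsto_nhdsWithin_Icc_right ht hh z)

lemma hasDerivWithinAt_apply (hR : IsQuasiSemigroup R) (hA : IsGenerator R A D) (ht : 0 ≤ t)
    {h : ℝ} (hh : h ∈ Ico 0 s) {z : X} (hz : z ∈ D) :
    HasDerivWithinAt (fun u => R (t + u) (s - u) z) (-R (t + h) (s - h) (A (t + h) z))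
      (Ici h) h := by
  obtain ⟨C, hC⟩ := hR.exists_norm_le (s := s) ht
  have hfilter : 𝓝[>] h ≤ 𝓝[Icc h s] h := by
    rw [← nhdsWithin_Ioo_eq_nhdsGT hh.2]
    exact nhdsWithin_mono _ Ioo_subset_Icc_self
  have hbound : ∀ᶠ u in 𝓝[>] h, ‖R (t + u) (s - u)‖ ≤ C :=
    hfilter (eventually_nhdsWithin_of_forall fun u hu => hC u ⟨hh.1.trans hu.1, hu.2⟩)
  have hshift : Tendsto (fun u => u - h) (𝓝[>] h) (𝓝[>] 0) :=
    tendsto_sub_const_nhdsWithin fun _ (hu : h < _) => sub_pos.2 hu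
  have hgen : Tendsto (fun u => (u - h)⁻¹ • (R (t + h) (u - h) z - z)) (𝓝[>] h)
      (𝓝 (A (t + h) z)) :=
    (hA.2 (t + h) (by linarith [hh.1]) z hz).comp hshift
  rw [← hasDerivWithinAt_Ioi_iff_Ici,
    hasDerivWithinAt_iff_tendsto_slope' (self_notMem_Ioi (a := h))]
  have hcont := (hR.tendsto_nhdsWithin_Icc_right ht (Ico_subset_Icc_self hh) (A (t + h) z))
  refine (tendsto_apply_of_eventually_norm_le hbound hgen (hcont.mono_left hfilter)).neg.congr' ?_
  filter_upwards [hfilter self_mem_nhdsWithin] with u hu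
  rw [slope_def_module, hR.apply_eq_apply_apply ht hh.1 hu.1 hu.2 z, ← map_sub, ← map_neg,
    ← smul_neg, neg_sub, ContinuousLinearMap.map_smul_of_tower]

lemma hasDerivWithinAt_exp_smul_apply (hR : IsQuasiSemigroup R) (hA : IsGenerator R A D)
    (ht : 0 ≤ t) (lam : ℂ) {h : ℝ} (hh : h ∈ Ico 0 s) {z : X} (hz : z ∈ D) :
    HasDerivWithinAt (fun u : ℝ => Complex.exp (lam * u) • R (t + u) (s - u) z)
      (Complex.exp (lam * h) • R (t + h) (s - h) (lam • z - A (t + h) z)) (Ici h) h := by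
  have hexp :
      HasDerivAt (fun u : ℝ => Complex.exp (lam * u)) (Complex.exp (lam * h) * lam) h := by
    simpa using ((Complex.ofRealCLM.hasDerivAt (x := h)).const_mul lam).cexp
  refine (hexp.hasDerivWithinAt.smul (hR.hasDerivWithinAt_apply hA ht hh hz)).congr_deriv ?_
  rw [map_sub, map_smul]
  module

theorem apply_eq_sum_of_forall_succ_eq (hR : IsQuasiSemigroup R) (hA : IsGenerator R A D)
    (hconst : ∀ t h : ℝ, 0 ≤ t → 0 ≤ h → A (t + h) = A t) (ht : 0 ≤ t) (hs : 0 ≤ s)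
    {lam : ℂ} {v : ℕ → X} {n : ℕ} (hvD : ∀ k < n, v k ∈ D)
    (hv : ∀ k, v (k + 1) = lam • v k - A t (v k)) (hvn : v n = 0) {k : ℕ} (hk : k ≤ n) :
    R t s (v k) =
      ∑ j ∈ Finset.range (n - k), ((-s) ^ j / j !) • Complex.exp (lam * s) • v (k + j) := by
  let F : ℕ → ℝ → X := fun k u => Complex.exp (lam * u) • R (t + u) (s - u) (v k)
  have hFcont : ∀ k < n, ContinuousOn (F k) (Icc 0 s) := fun k hk =>
    (by fun_prop : Continuous fun u : ℝ => Complex.exp (lam * u)).continuousOn.smul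
      (hR.continuousOn_apply hA ht (hvD k hk))
  have hFderiv : ∀ k < n, ∀ u ∈ Ico 0 s, HasDerivWithinAt (F k) (F (k + 1) u) (Ici u) u := by
    intro k hk u hu
    have h := hR.hasDerivWithinAt_exp_smul_apply hA ht lam hu (hvD k hk)
    rwa [hconst t u ht hu.1, ← hv] at h
  have hFn : ∀ u ∈ Icc 0 s, F n u = 0 := fun u _ => by simp [F, hvn]
  simpa [F, hR.apply_zero (add_nonneg ht hs)] using
    eq_sum_sub_pow_div_factorial_smul_of_hasDerivWithinAt hFcont hFderiv hFn hk 0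
      (left_mem_Icc.2 hs)

theorem exp_smul_sub_apply_mem_span (hR : IsQuasiSemigroup R) (hA : IsGenerator R A D)
    (hconst : ∀ t h : ℝ, 0 ≤ t → 0 ≤ h → A (t + h) = A t) (ht : 0 ≤ t) (hs : 0 ≤ s)
    {lam : ℂ} {v : ℕ → X} {n : ℕ} (hvD : ∀ k < n, v k ∈ D)
    (hv : ∀ k, v (k + 1) = lam • v k - A t (v k)) (hvn : v n = 0) {k : ℕ} (hk : k < n) :
    Complex.exp (lam * s) • v k - R t s (v k) ∈ Submodule.span ℂ (v '' Ico (k + 1) n) := by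
  have hsum := hR.apply_eq_sum_of_forall_succ_eq hA hconst ht hs hvD hv hvn hk.le
  rw [show n - k = n - (k + 1) + 1 by omega, Finset.sum_range_succ'] at hsum
  have hdiff : Complex.exp (lam * s) • v k - R t s (v k) = -∑ j ∈ Finset.range (n - (k + 1)),
      ((-s) ^ (j + 1) / (j + 1)!) • Complex.exp (lam * s) • v (k + (j + 1)) := by
    simp [hsum]
  rw [hdiff]
  refine neg_mem (Submodule.sum_mem _ fun j hj => ?_)
  refine Submodule.smul_of_tower_mem _ _ (Submodule.smul_mem _ _ (Submodule.subset_span ?_))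
  exact ⟨k + (j + 1), ⟨by omega, by rw [Finset.mem_range] at hj; omega⟩, rfl⟩

end IsQuasiSemigroup

theorem quasiSemigroup_kernel_inclusion_general
    [NormedAddCommGroup X] [NormedSpace ℂ X]
    (R : ℝ → ℝ → X →L[ℂ] X) (hR : IsQuasiSemigroup R)
    (A : ℝ → X → X) (D : Set X) (hA : IsGenerator R A D)
    (hconst : ∀ t h : ℝ, 0 ≤ t → 0 ≤ h → A (t + h) = A t)
    (lam : ℂ) (t s : ℝ) (ht : 0 ≤ t) (hs : 0 ≤ s) (n : ℕ) (x : X)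
    (hxD : ∀ k : ℕ, k < n → (fun y : X => lam • y - A t y)^[k] x ∈ D)
    (hker : (fun y : X => lam • y - A t y)^[n] x = 0) :
    (fun y : X => Complex.exp (lam * (s : ℂ)) • y - R t s y)^[n] x = 0 := by
  set v : ℕ → X := fun k => (fun y : X => lam • y - A t y)^[k] x
  set L : X →L[ℂ] X := Complex.exp (lam * s) • ContinuousLinearMap.id ℂ X - R t s
  have hstep : ∀ k < n, L (v k) ∈ Submodule.span ℂ (v '' Ico (k + 1) n) := fun k hk =>
    hR.exp_smul_sub_apply_mem_span hA hconst ht hs hxD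
      (fun k => Function.iterate_succ_apply' _ k x) hker hk
  have hx : x ∈ Submodule.span ℂ (v '' Iio n) := by
    rcases n.eq_zero_or_pos with rfl | hn
    · exact (show x = 0 from hker) ▸ Submodule.zero_mem _
    · exact Submodule.subset_span ⟨0, hn, rfl⟩
  exact (L : X →ₗ[ℂ] X).iterate_apply_eq_zero_of_apply_mem_span v hstep hx

/-- Kernel inclusion: `N[(λ - A(t))^n] ⊆ N[(e^{λs} - R(t,s))^n]`. -/
theorem quasiSemigroup_kernel_inclusion
    [NormedAddCommGroup X] [NormedSpace ℂ X] [CompleteSpace X]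
    (R : ℝ → ℝ → X →L[ℂ] X) (hR : IsQuasiSemigroup R)
    (A : ℝ → X → X) (D : Set X) (hA : IsGenerator R A D)
    (hconst : ∀ t h : ℝ, 0 ≤ t → 0 ≤ h → A (t + h) = A t)
    (lam : ℂ) (t s : ℝ) (ht : 0 ≤ t) (hs : 0 ≤ s) (n : ℕ) (x : X)
    (hxD : ∀ k : ℕ, k < n → (fun y : X => lam • y - A t y)^[k] x ∈ D)
    (hker : (fun y : X => lam • y - A t y)^[n] x = 0) :
    (fun y : X => Complex.exp (lam * (s : ℂ)) • y - R t s y)^[n] x = 0 :=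
  quasiSemigroup_kernel_inclusion_general R hR A D hA hconst lam t s ht hs n x hxD hker
end

section
/- Let A(t) be the generator of a C_0-quasi-semigroup {R(t,s)} on a Banach space X with A(t+h)=A(t) for all t,h ≥ 0. Then e^{σ_p(A(t)) s} ⊆ σ_p(R(t,s)) for all s ≥ 0: if λ is an eigenvalue of A(t) with eigenvector x, then e^{λs} is an eigenvalue of R(t,s) with the same eigenvector x. -/
open Filter Topology MeasureTheory Set

variable {X : Type*}

/-!
For an eigenvector `x`, the path `r ↦ R(t+r, s-r)(e^{λr} x)` on `[0, s]` runs from `R(t,s) x` to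
`e^{λs} x`. By the composition law its increments are `R(t+r', s-r')` applied to
`e^{λr} (e^{λ(r'-r)} x - R(t+r, r'-r) x)`. Since `A(t+r) x = A(t) x = λ x`, this is `o(r' - r)`
as `r' ↓ r`, so the path has zero right derivative; the backward limit in the definition of the
domain makes it continuous from the left. Hence it is constant.
-/

lemma tendsto_inv_smul_cexp_mul_sub_one (lam : ℂ) :
    Tendsto (fun h : ℝ => h⁻¹ • (Complex.exp (lam * h) - 1)) (𝓝[≠] 0) (𝓝 lam) := by
  have hd : HasDerivAt (fun h : ℝ => Complex.exp (lam * h)) lam 0 := by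
    simpa using ((Complex.ofRealCLM.hasDerivAt (x := 0)).const_mul lam).cexp
  simpa using hasDerivAt_iff_tendsto_slope_zero.1 hd

lemma tendsto_zero_of_tendsto_inv_smul {E : Type*} [NormedAddCommGroup E] [NormedSpace ℝ E]
    {f : ℝ → E} {y : E} (h : Tendsto (fun s : ℝ => s⁻¹ • f s) (𝓝[>] 0) (𝓝 y)) :
    Tendsto f (𝓝[>] 0) (𝓝 0) := by
  have hmul := (tendsto_id.mono_left nhdsWithin_le_nhds).smul h
  rw [zero_smul] at hmul
  refine hmul.congr' ?_
  filter_upwards [self_mem_nhdsWithin] with s hs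
  exact smul_inv_smul₀ (ne_of_gt hs) _

lemma continuousOn_Icc_of_continuousWithinAt_Ici_Iic {α β : Type*} [TopologicalSpace α]
    [LinearOrder α] [TopologicalSpace β] {f : α → β} {a b : α}
    (hright : ∀ r ∈ Ico a b, ContinuousWithinAt f (Ici r) r)
    (hleft : ∀ r ∈ Ioc a b, ContinuousWithinAt f (Iic r) r) :
    ContinuousOn f (Icc a b) := by
  intro r hr
  rw [← Icc_union_Icc_eq_Icc hr.1 hr.2]
  refine ContinuousWithinAt.union ?_ ?_
  · rcases hr.1.eq_or_lt with rfl | har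
    · simp
    · exact (hleft r ⟨har, hr.2⟩).mono Icc_subset_Iic_self
  · rcases hr.2.eq_or_lt with rfl | hrb
    · simp
    · exact (hright r ⟨hr.1, hrb⟩).mono Icc_subset_Ici_self

section QuasiSemigroup

variable [NormedAddCommGroup X] [NormedSpace ℂ X]

noncomputable def expInterpolant (R : ℝ → ℝ → X →L[ℂ] X) (lam : ℂ) (t s : ℝ) (x : X) (r : ℝ) : X :=
  R (t + r) (s - r) (Complex.exp (lam * r) • x)

variable {R : ℝ → ℝ → X →L[ℂ] X} {lam : ℂ} {t s r r' : ℝ} {x : X}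

lemma GenLimit.tendsto_inv_smul_cexp_smul_sub {a : ℝ} (hgen : GenLimit R a x (lam • x)) :
    Tendsto (fun h : ℝ => h⁻¹ • (Complex.exp (lam * h) • x - R a h x)) (𝓝[>] 0) (𝓝 0) := by
  have hexp :=
    ((tendsto_inv_smul_cexp_mul_sub_one lam).mono_left (nhdsGT_le_nhdsNE 0)).smul_const x
  refine (sub_self (lam • x) ▸ hexp.sub hgen).congr fun h => ?_
  rw [smul_assoc, ← smul_sub, sub_smul, one_smul, sub_sub_sub_cancel_right]

lemma IsGenerator.tendsto_apply_sub_of_mem {A : ℝ → X → X} {D : Set X} (hA : IsGenerator R A D)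
    (hx : x ∈ D) {τ : ℝ} (hτ : 0 < τ) :
    Tendsto (fun h : ℝ => R (τ - h) h x) (𝓝[>] 0) (𝓝 x) := by
  obtain ⟨y, -, hy⟩ := ((hA.1 x).1 hx).2 τ hτ
  simpa using (tendsto_zero_of_tendsto_inv_smul hy).add_const x

@[simp]
lemma expInterpolant_zero : expInterpolant R lam t s x 0 = R t s x := by
  simp [expInterpolant]

lemma expInterpolant_self (hR : IsQuasiSemigroup R) (hts : 0 ≤ t + s) :
    expInterpolant R lam t s x s = Complex.exp (lam * s) • x := by
  simp [expInterpolant, hR.1 _ hts]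

lemma expInterpolant_sub (hR : IsQuasiSemigroup R) (ht : 0 ≤ t) (hr : 0 ≤ r) (hrr' : r ≤ r')
    (hr's : r' ≤ s) :
    expInterpolant R lam t s x r' - expInterpolant R lam t s x r =
      Complex.exp (lam * r) •
        R (t + r') (s - r') (Complex.exp (lam * (r' - r : ℝ)) • x - R (t + r) (r' - r) x) := by
  have hcomp := hR.2.1 (t + r) (s - r') (r' - r) (by linarith) (by linarith) (by linarith)
  rw [show s - r' + (r' - r) = s - r by ring, show t + r + (r' - r) = t + r' by ring] at hcomp
  have hexp :
      Complex.exp (lam * r') = Complex.exp (lam * r) * Complex.exp (lam * (r' - r : ℝ)) := by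
    rw [← Complex.exp_add]; push_cast; ring_nf
  simp only [expInterpolant, hcomp, ContinuousLinearMap.comp_apply, map_smul, map_sub, hexp,
    mul_smul, smul_sub]

lemma hasDerivWithinAt_expInterpolant (hR : IsQuasiSemigroup R) (ht : 0 ≤ t) (hr : 0 ≤ r)
    (hrs : r < s) (hgen : GenLimit R (t + r) x (lam • x)) :
    HasDerivWithinAt (expInterpolant R lam t s x) 0 (Ici r) r := by
  obtain ⟨M, -, -, -, hM⟩ := hR.2.2.2
  have hshift : 𝓝[>] r = map (r + ·) (𝓝[>] 0) := by simp
  rw [← hasDerivWithinAt_Ioi_iff_Ici, hasDerivWithinAt_iff_tendsto_slope' self_notMem_Ioi, hshift,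
    tendsto_map'_iff]
  refine squeeze_zero_norm' (a := fun h : ℝ => ‖Complex.exp (lam * r)‖ * M (t + s) *
    ‖h⁻¹ • (Complex.exp (lam * h) • x - R (t + r) h x)‖) ?_ ?_
  · filter_upwards [Ioo_mem_nhdsGT (sub_pos.2 hrs)] with h ⟨hh, hhs⟩
    have hopNorm : ‖R (t + (r + h)) (s - (r + h))‖ ≤ M (t + s) := by
      simpa using hM (t + (r + h)) (s - (r + h)) (by linarith) (by linarith)
    rw [Function.comp_apply, slope_def_module, expInterpolant_sub hR ht hr (by linarith)
      (by linarith), add_sub_cancel_left, norm_smul, norm_smul, norm_smul (h⁻¹)]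
    calc ‖h⁻¹‖ * (‖Complex.exp (lam * r)‖ * ‖R (t + (r + h)) (s - (r + h))
            (Complex.exp (lam * h) • x - R (t + r) h x)‖)
        ≤ ‖h⁻¹‖ * (‖Complex.exp (lam * r)‖ *
            (M (t + s) * ‖Complex.exp (lam * h) • x - R (t + r) h x‖)) := by
          gcongr; exact ContinuousLinearMap.le_of_opNorm_le _ hopNorm _
      _ = _ := by ring
  · simpa using hgen.tendsto_inv_smul_cexp_smul_sub.norm.const_mul
      (‖Complex.exp (lam * r)‖ * M (t + s))

lemma continuousWithinAt_Iic_expInterpolant (hR : IsQuasiSemigroup R) (ht : 0 ≤ t) (hr : 0 < r)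
    (hrs : r ≤ s) (hback : Tendsto (fun h : ℝ => R (t + r - h) h x) (𝓝[>] 0) (𝓝 x)) :
    ContinuousWithinAt (expInterpolant R lam t s x) (Iic r) r := by
  have hshift : 𝓝[<] r = map (r - ·) (𝓝[>] 0) := by simp
  rw [← continuousWithinAt_Iio_iff_Iic, ContinuousWithinAt, hshift, tendsto_map'_iff]
  have hexp : Continuous fun h : ℝ => Complex.exp (lam * h) := by fun_prop
  have hexp' : Continuous fun h : ℝ => Complex.exp (lam * (r - h : ℝ)) := by fun_prop
  have hincr : Tendsto (fun h : ℝ => Complex.exp (lam * (r - h : ℝ)) •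
      R (t + r) (s - r) (Complex.exp (lam * h) • x - R (t + r - h) h x)) (𝓝[>] 0) (𝓝 0) := by
    have hdiff : Tendsto (fun h : ℝ => Complex.exp (lam * h) • x - R (t + r - h) h x)
        (𝓝[>] 0) (𝓝 (Complex.exp (lam * (0 : ℝ)) • x - x)) :=
      ((hexp.tendsto 0).mono_left nhdsWithin_le_nhds).smul_const x |>.sub hback
    simpa using ((hexp'.tendsto 0).mono_left nhdsWithin_le_nhds).smul
      (((R (t + r) (s - r)).continuous.tendsto _).comp hdiff)
  have hlim := (tendsto_const_nhds (x := expInterpolant R lam t s x r)).sub hincr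
  rw [sub_zero] at hlim
  refine hlim.congr' ?_
  filter_upwards [Ioo_mem_nhdsGT hr] with h ⟨hh, hhr⟩
  have hsub := expInterpolant_sub (lam := lam) (x := x) hR ht (r := r - h) (by linarith)
    (by linarith) hrs
  rw [sub_sub_cancel, show t + (r - h) = t + r - h by ring] at hsub
  rw [Function.comp_apply, ← hsub, sub_sub_cancel]

end QuasiSemigroup

theorem quasiSemigroup_point_spectral_inclusion_general
    [NormedAddCommGroup X] [NormedSpace ℂ X]
    (R : ℝ → ℝ → X →L[ℂ] X) (hR : IsQuasiSemigroup R)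
    (A : ℝ → X → X) (D : Set X) (hA : IsGenerator R A D)
    (hconst : ∀ t h : ℝ, 0 ≤ t → 0 ≤ h → A (t + h) = A t)
    (lam : ℂ) (t s : ℝ) (ht : 0 ≤ t) (hs : 0 ≤ s)
    (x : X) (hx : x ∈ D) (heig : A t x = lam • x) :
    R t s x = Complex.exp (lam * (s : ℂ)) • x := by
  have hgen : ∀ r, 0 ≤ r → GenLimit R (t + r) x (lam • x) := fun r hr => by
    simpa [hconst t r ht hr, heig] using hA.2 (t + r) (by linarith) x hx
  have hderiv : ∀ r ∈ Ico 0 s, HasDerivWithinAt (expInterpolant R lam t s x) 0 (Ici r) r :=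
    fun r hr => hasDerivWithinAt_expInterpolant hR ht hr.1 hr.2 (hgen r hr.1)
  have hcont : ContinuousOn (expInterpolant R lam t s x) (Icc 0 s) :=
    continuousOn_Icc_of_continuousWithinAt_Ici_Iic (fun r hr => (hderiv r hr).continuousWithinAt)
      fun r hr => continuousWithinAt_Iic_expInterpolant hR ht hr.1 hr.2
        (hA.tendsto_apply_sub_of_mem hx (by linarith [hr.1]))
  have hconstant := constant_of_has_deriv_right_zero hcont hderiv s (right_mem_Icc.2 hs)
  rw [expInterpolant_self hR (by linarith), expInterpolant_zero] at hconstant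
  exact hconstant.symm

/-- Point spectral inclusion: an eigenvector of `A(t)` for `λ` is an eigenvector of
`R(t,s)` for `e^{λs}`. -/
theorem quasiSemigroup_point_spectral_inclusion
    [NormedAddCommGroup X] [NormedSpace ℂ X] [CompleteSpace X]
    (R : ℝ → ℝ → X →L[ℂ] X) (hR : IsQuasiSemigroup R)
    (A : ℝ → X → X) (D : Set X) (hA : IsGenerator R A D)
    (hconst : ∀ t h : ℝ, 0 ≤ t → 0 ≤ h → A (t + h) = A t)
    (lam : ℂ) (t s : ℝ) (ht : 0 ≤ t) (hs : 0 ≤ s)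
    (x : X) (hx : x ∈ D) (hx0 : x ≠ 0) (heig : A t x = lam • x) :
    R t s x = Complex.exp (lam * (s : ℂ)) • x :=
  quasiSemigroup_point_spectral_inclusion_general R hR A D hA hconst lam t s ht hs x hx heig
end

section
/- Let T be a bounded semi-regular operator on a Banach space X (i.e., Rg(T) is closed and N(T) ⊆ Rg^∞(T) := ∩_{n≥1} Rg(T^n)). Then the operator T̂ : X/Rg^∞(T) → X/Rg^∞(T) induced by T on the quotient space is bounded below, i.e., there exists c > 0 with ‖T̂ x̂‖ ≥ c ‖x̂‖ for all x̂ ∈ X/Rg^∞(T). -/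
open Filter Topology MeasureTheory Set

variable {X : Type*}

/-!
A vector `x` with `T x ∈ Rg^∞(T)` lies in `Rg^∞(T)`: if `T x = T^(n+1) y` then `x - T^n y ∈ N(T)`,
and `N(T) ⊆ Rg(T^n)`. Thus `T⁻¹(Rg^∞(T)) ⊆ Rg^∞(T)`, i.e. `T̂` is injective.
Since `Rg(T)` is closed, the open mapping theorem gives preimages under `T` with controlled norm for
every vector of `Rg(T) ⊇ Rg^∞(T)`. Lifting each representative `y` of `T̂ x̂` to some `z` with
`‖z‖ ≤ C ‖y‖`, the inclusion above gives `ẑ = x̂`, so `‖x̂‖ ≤ C ‖T̂ x̂‖`.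
-/

namespace Module.End

variable {R M : Type*} [Ring R] [AddCommGroup M] [Module R M]

def hyperrange (f : Module.End R M) : Submodule R M :=
  ⨅ n ∈ {n : ℕ | 1 ≤ n}, LinearMap.range (f ^ n)

theorem hyperrange_le_range_pow (f : Module.End R M) {n : ℕ} (hn : 1 ≤ n) :
    f.hyperrange ≤ LinearMap.range (f ^ n) :=
  biInf_le _ hn

theorem mem_range_pow_of_apply_mem_range_pow_succ {f : Module.End R M} {n : ℕ} {x : M}
    (hker : LinearMap.ker f ≤ LinearMap.range (f ^ n))
    (hx : f x ∈ LinearMap.range (f ^ (n + 1))) : x ∈ LinearMap.range (f ^ n) := by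
  obtain ⟨y, hy⟩ := hx
  have hxy : x - (f ^ n) y ∈ LinearMap.ker f := by
    rw [LinearMap.mem_ker, map_sub, ← Module.End.mul_apply, ← pow_succ', hy, sub_self]
  simpa using add_mem (hker hxy) (LinearMap.mem_range_self (f ^ n) y)

theorem comap_hyperrange_le {f : Module.End R M} (hker : LinearMap.ker f ≤ f.hyperrange) :
    f.hyperrange.comap f ≤ f.hyperrange := fun x hx ↦ by
  refine Submodule.mem_iInf _ |>.2 fun n ↦ Submodule.mem_iInf _ |>.2 fun hn ↦
    mem_range_pow_of_apply_mem_range_pow_succ ?_ ?_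
  · exact hker.trans (f.hyperrange_le_range_pow hn)
  · exact f.hyperrange_le_range_pow (Nat.le_add_left 1 n) hx

end Module.End

namespace ContinuousLinearMap

variable {𝕜 E F : Type*} [NontriviallyNormedField 𝕜]
  [NormedAddCommGroup E] [NormedSpace 𝕜 E] [CompleteSpace E]
  [NormedAddCommGroup F] [NormedSpace 𝕜 F] [CompleteSpace F]

theorem exists_preimage_norm_le_of_isClosed_range (f : E →L[𝕜] F)
    (hf : IsClosed (LinearMap.range (f : E →ₗ[𝕜] F) : Set F)) :
    ∃ C > 0, ∀ y ∈ LinearMap.range (f : E →ₗ[𝕜] F), ∃ x, f x = y ∧ ‖x‖ ≤ C * ‖y‖ := by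
  have := hf.completeSpace_coe
  obtain ⟨C, hC, h⟩ := (f.codRestrict (LinearMap.range (f : E →ₗ[𝕜] F)) (LinearMap.mem_range_self _)).exists_preimage_norm_le
    (by rintro ⟨_, x, rfl⟩; exact ⟨x, rfl⟩)
  refine ⟨C, hC, fun y hy ↦ ?_⟩
  obtain ⟨x, hx, hxC⟩ := h ⟨y, hy⟩
  exact ⟨x, congrArg Subtype.val hx, hxC⟩

theorem exists_pos_mul_norm_mk_le_norm_mk_apply (f : E →L[𝕜] F)
    (hf : IsClosed (LinearMap.range (f : E →ₗ[𝕜] F) : Set F)) {N : Submodule 𝕜 E} {P : Submodule 𝕜 F}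
    (hP : P ≤ LinearMap.range (f : E →ₗ[𝕜] F)) (hPN : P.comap (f : E →ₗ[𝕜] F) ≤ N) :
    ∃ c > 0, ∀ x : E, c * ‖N.mkQ x‖ ≤ ‖P.mkQ (f x)‖ := by
  obtain ⟨C, hC, hpre⟩ := f.exists_preimage_norm_le_of_isClosed_range hf
  refine ⟨C⁻¹, inv_pos.2 hC, fun x ↦ QuotientAddGroup.le_norm_iff.2 fun y hy ↦ ?_⟩
  have hyx : y - f x ∈ P := (Submodule.Quotient.eq P).1 hy
  obtain ⟨z, rfl, hz⟩ := hpre y (by simpa using add_mem (hP hyx) (LinearMap.mem_range_self (f : E →ₗ[𝕜] F) x))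
  have hzx : N.mkQ z = N.mkQ x := (Submodule.Quotient.eq N).2 (hPN (by simpa using hyx))
  rw [inv_mul_le_iff₀ hC, ← hzx]
  exact (Submodule.Quotient.norm_mk_le N z).trans hz

end ContinuousLinearMap

/-- If `T` is a bounded semi-regular operator (closed range, kernel contained in the
hyper-range `N = ⨅_{n ≥ 1} Rg(T^n)`), then the operator induced by `T` on `X ⧸ N`
is bounded below. -/
theorem semiRegular_quotient_bounded_below
    [NormedAddCommGroup X] [NormedSpace ℂ X] [CompleteSpace X]
    (T : X →L[ℂ] X)
    (hclosed : IsClosed (LinearMap.range (T : X →ₗ[ℂ] X) : Set X))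
    (N : Submodule ℂ X) (hN : N = ⨅ n ∈ {n : ℕ | 1 ≤ n}, LinearMap.range ((T ^ n : X →L[ℂ] X) : X →ₗ[ℂ] X))
    (hker : LinearMap.ker (T : X →ₗ[ℂ] X) ≤ N)
    (hinv : N ≤ N.comap (T : X →ₗ[ℂ] X)) :
    ∃ c : ℝ, 0 < c ∧ ∀ y : X ⧸ N, c * ‖y‖ ≤ ‖Submodule.mapQ N N (T : X →ₗ[ℂ] X) hinv y‖ := by
  simp only [ContinuousLinearMap.toLinearMap_pow] at hN
  change N = Module.End.hyperrange (T : X →ₗ[ℂ] X) at hN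
  subst hN
  have hrange : Module.End.hyperrange (T : X →ₗ[ℂ] X) ≤ LinearMap.range (T : X →ₗ[ℂ] X) := by
    simpa using Module.End.hyperrange_le_range_pow (T : X →ₗ[ℂ] X) le_rfl
  obtain ⟨c, hc, hT⟩ := T.exists_pos_mul_norm_mk_le_norm_mk_apply hclosed hrange
    (Module.End.comap_hyperrange_le hker)
  exact ⟨c, hc, Submodule.mkQ_surjective _ |>.forall.2 hT⟩
end
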